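/- Let g : [0, ∞) → {1, 2, 3, …} be right-continuous and nondecreasing with g(u) → ∞ as u → ∞, let g⁻¹(n) = inf{u ≥ 0 : g(u) ≥ n}, and let D be the positive-integer-valued random variable with P(D ≥ n) = 1 − exp(−1/g⁻¹(n)). Suppose lim_{n→∞} n·P(D ≥ n) = c with 0 < c < ∞, that 0 < liminf_{n→∞} n²·P(D = n) ≤ limsup_{n→∞} n²·P(D = n) < ∞, and that Σ_{n=1}^∞ |c/n − P(D ≥ n)| < ∞. Then ∫_1^∞ |g(y) − c·y| / y² dy < ∞. -/

import Mathlib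

open Filter MeasureTheory
open scoped ENNReal

/-- `g⁻¹(n) = inf {u ≥ 0 : g(u) ≥ n}`. -/
noncomputable def ginv (g : ℝ → ℕ) (n : ℕ) : ℝ := sInf {u : ℝ | 0 ≤ u ∧ n ≤ g u}

/-- `P(D ≥ n)` for `D = g(1/X)`, `X` a rate-1 exponential:
`P(D ≥ n) = 1 − exp(−1/g⁻¹(n))` (equal to `1` when `g⁻¹(n) = 0`). -/
noncomputable def tailP (g : ℝ → ℕ) (n : ℕ) : ℝ :=
  if ginv g n = 0 then 1 else 1 - Real.exp (-1 / ginv g n)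

/-- `P(D = n) = P(D ≥ n) − P(D ≥ n+1)`. -/
noncomputable def pmfP (g : ℝ → ℕ) (n : ℕ) : ℝ := tailP g n - tailP g (n + 1)

/-!
For `y ≥ 0`, right-continuity gives `ginv g n ≤ y ↔ n ≤ g y`, so `g y` counts the `n ≥ 1` with
`ginv g n ≤ y`, just as `⌊c y⌋₊` counts those with `n / c ≤ y`. Hence `|g y - c y|` is at most `1`
plus the number of `n` for which `y` lies between `ginv g n` and `n / c`, and integrating against
`dy / y²` on `[1, ∞)` bounds the integral by `1 + ∑ₙ |(ginv g n)⁻¹ - c / n|` (truncating both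
reciprocals at `1`). Finally `(ginv g n)⁻¹ = -log (1 - P(D ≥ n)) = P(D ≥ n) + O(P(D ≥ n)²)` and
`P(D ≥ n) = O(1 / n)`, so this series is eventually dominated by
`∑ₙ |c / n - P(D ≥ n)| + O(∑ₙ 1 / n²)`.
-/
open Set Asymptotics
open scoped Topology symmDiff

lemma lintegral_Ici_inv_sq {s : ℝ} (hs : 0 < s) :
    ∫⁻ y in Ici s, ENNReal.ofReal (y ^ 2)⁻¹ = ENNReal.ofReal s⁻¹ := by
  have hderiv : ∀ x ∈ Ici s, HasDerivAt (fun y : ℝ => -y⁻¹) (x ^ 2)⁻¹ x := fun x hx =>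
    (hasDerivAt_inv (hs.trans_le hx).ne').neg.congr_deriv (neg_neg _)
  have hpos : ∀ x ∈ Ioi s, 0 ≤ (x ^ 2)⁻¹ := fun x _ => by positivity
  have hlim : Tendsto (fun y : ℝ => -y⁻¹) atTop (𝓝 0) := by
    simpa using (tendsto_inv_atTop_zero (𝕜 := ℝ)).neg
  rw [Measure.restrict_congr_set Ioi_ae_eq_Ici.symm, ← ofReal_integral_eq_lintegral_ofReal
    (integrableOn_Ioi_deriv_of_nonneg' hderiv hpos hlim) ((ae_restrict_iff' measurableSet_Ioi).2
      (ae_of_all _ hpos)), integral_Ioi_of_hasDerivAt_of_nonneg' hderiv hpos hlim]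
  simp

lemma lintegral_Ico_inv_sq {s t : ℝ} (hs : 0 < s) (hst : s ≤ t) :
    ∫⁻ y in Ico s t, ENNReal.ofReal (y ^ 2)⁻¹ = ENNReal.ofReal (s⁻¹ - t⁻¹) := by
  have hsplit := lintegral_union (μ := volume) (f := fun y : ℝ => ENNReal.ofReal (y ^ 2)⁻¹)
    (measurableSet_Ici (a := t))
    ((Iio_disjoint_Ici le_rfl).mono_left (Ico_subset_Iio_self (a := s)))
  rw [Ico_union_Ici_eq_Ici hst, lintegral_Ici_inv_sq hs, lintegral_Ici_inv_sq (hs.trans_le hst)]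
    at hsplit
  rw [ENNReal.ofReal_sub _ (inv_nonneg.2 (hs.le.trans hst)), hsplit,
    ENNReal.add_sub_cancel_right ENNReal.ofReal_ne_top]

lemma lintegral_Ici_one_indicator_Ici_symmDiff_Ici_le (a b : ℝ) :
    ∫⁻ y in Ici 1, (Ici a ∆ Ici b).indicator (fun y => ENNReal.ofReal (y ^ 2)⁻¹) y ≤
      ENNReal.ofReal |(max a 1)⁻¹ - (max b 1)⁻¹| := by
  wlog hab : a ≤ b generalizing a b
  · rw [symmDiff_comm, abs_sub_comm]
    exact this b a (le_of_not_ge hab)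
  have hpos : 0 < max a 1 := zero_lt_one.trans_le (le_max_right _ _)
  have hmax : max a 1 ≤ max b 1 := max_le_max_right 1 hab
  have hsub : Ico a b ∩ Ici 1 ⊆ Ico (max a 1) (max b 1) := fun y ⟨⟨hay, hyb⟩, hy⟩ =>
    ⟨max_le hay hy, hyb.trans_le (le_max_left _ _)⟩
  rw [symmDiff_of_ge (Ici_subset_Ici.2 hab), Ici_sdiff_Ici,
    setLIntegral_indicator measurableSet_Ico]
  calc _ ≤ ∫⁻ y in Ico (max a 1) (max b 1), ENNReal.ofReal (y ^ 2)⁻¹ := lintegral_mono_set hsub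
    _ = _ := by
      rw [lintegral_Ico_inv_sq hpos hmax, abs_of_nonneg (sub_nonneg.2 (inv_anti₀ hpos hmax))]

lemma ofReal_abs_natCast_sub_le_tsum_indicator (m m' : ℕ) :
    ENNReal.ofReal |(m : ℝ) - m'| ≤ ∑' n : ℕ, (Iic m ∆ Iic m').indicator 1 n := by
  wlog h : m' ≤ m generalizing m m'
  · rw [abs_sub_comm, symmDiff_comm]
    exact this m' m (le_of_not_ge h)
  rw [symmDiff_of_ge (Iic_subset_Iic.2 h), Iic_sdiff_Iic]
  calc ENNReal.ofReal |(m : ℝ) - m'| = ∑ n ∈ Finset.Ioc m' m, (Ioc m' m).indicator 1 n := by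
        rw [Finset.sum_congr rfl fun n hn => indicator_of_mem (Finset.coe_Ioc m' m ▸ hn) _]
        simp [← Nat.cast_sub h]
    _ ≤ _ := ENNReal.sum_le_tsum _

lemma abs_inv_max_one_sub_inv_max_one_le {a b : ℝ} (ha : 0 < a) (hb : 0 < b) :
    |(max a 1)⁻¹ - (max b 1)⁻¹| ≤ |a⁻¹ - b⁻¹| := by
  have hinv {x : ℝ} (hx : 0 < x) : (max x 1)⁻¹ = min x⁻¹ 1 := by
    rcases le_total x 1 with h | h
    · rw [max_eq_right h, inv_one, min_eq_right ((one_le_inv₀ hx).2 h)]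
    · rw [max_eq_left h, min_eq_left (inv_le_one_of_one_le₀ h)]
  simpa [hinv ha, hinv hb] using abs_min_sub_min_le_max a⁻¹ 1 b⁻¹ 1

lemma ginv_nonneg (g : ℝ → ℕ) (n : ℕ) : 0 ≤ ginv g n :=
  Real.sInf_nonneg fun _ hu => hu.1

section
variable {g : ℝ → ℕ} {c : ℝ}

lemma ginv_le_iff (hmono : MonotoneOn g (Ici 0))
    (hrc : ∀ x, 0 ≤ x → ContinuousWithinAt g (Ici x) x) (hinf : Tendsto g atTop atTop)
    (n : ℕ) {u : ℝ} (hu : 0 ≤ u) : ginv g n ≤ u ↔ n ≤ g u := by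
  set S := {u : ℝ | 0 ≤ u ∧ n ≤ g u}
  have hbdd : BddBelow S := ⟨0, fun _ hv => hv.1⟩
  refine ⟨fun h => ?_, fun h => csInf_le hbdd ⟨hu, h⟩⟩
  have hne : S.Nonempty := by
    obtain ⟨x, hx⟩ := (hinf.eventually_ge_atTop n).exists_forall_of_atTop
    exact ⟨max x 0, le_max_right _ _, hx _ (le_max_left _ _)⟩
  have hs : 0 ≤ ginv g n := ginv_nonneg g n
  -- `ℕ` is discrete, so `g` is constant just to the right of `ginv g n`, where `S` accumulates.
  have hconst : ∀ᶠ v in 𝓝[≥] ginv g n, g v = g (ginv g n) := by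
    have := hrc _ hs
    rwa [ContinuousWithinAt, nhds_discrete, tendsto_pure] at this
  obtain ⟨v, hvS, hv⟩ :=
    ((isGLB_csInf hne hbdd).frequently_mem hne).and_eventually hconst |>.exists
  exact (hv ▸ hvS.2).trans (hmono hs hu h)

lemma ofReal_abs_sub_mul_le_tsum_indicator_add_one
    (hgc : ∀ (n : ℕ) {u : ℝ}, 0 ≤ u → (ginv g n ≤ u ↔ n ≤ g u)) (hc : 0 < c)
    {y : ℝ} (hy : 0 ≤ y) :
    ENNReal.ofReal |(g y : ℝ) - c * y| ≤
      (∑' n : ℕ, (Ici (ginv g n) ∆ Ici (n / c)).indicator 1 y) + 1 := by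
  have hcy : 0 ≤ c * y := by positivity
  have hfloor : |(g y : ℝ) - c * y| ≤ |(g y : ℝ) - ⌊c * y⌋₊| + 1 := by
    have h1 := Nat.floor_le hcy
    have h2 := Nat.lt_floor_add_one (c * y)
    calc |(g y : ℝ) - c * y|
        ≤ |(g y : ℝ) - ⌊c * y⌋₊| + |(⌊c * y⌋₊ : ℝ) - c * y| := abs_sub_le _ _ _
      _ ≤ _ := by gcongr; rw [abs_le]; constructor <;> linarith
  have hmem (n : ℕ) : n ∈ Iic (g y) ∆ Iic ⌊c * y⌋₊ ↔ y ∈ Ici (ginv g n) ∆ Ici (n / c) := by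
    simp only [mem_symmDiff, mem_Iic, mem_Ici, hgc n hy, div_le_iff₀ hc, mul_comm y,
      ← Nat.le_floor_iff hcy]
  calc ENNReal.ofReal |(g y : ℝ) - c * y| ≤ ENNReal.ofReal |(g y : ℝ) - ⌊c * y⌋₊| + 1 := by
        rw [← ENNReal.ofReal_one, ← ENNReal.ofReal_add (abs_nonneg _) zero_le_one]
        exact ENNReal.ofReal_le_ofReal hfloor
    _ ≤ (∑' n : ℕ, (Iic (g y) ∆ Iic ⌊c * y⌋₊).indicator 1 n) + 1 := by
        gcongr; exact ofReal_abs_natCast_sub_le_tsum_indicator _ _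
    _ = _ := by
        congr 1
        exact tsum_congr fun n => indicator_eq_indicator (hmem n) rfl

lemma setLIntegral_abs_sub_mul_div_sq_le
    (hgc : ∀ (n : ℕ) {u : ℝ}, 0 ≤ u → (ginv g n ≤ u ↔ n ≤ g u)) (hc : 0 < c) :
    ∫⁻ y in Ici 1, ENNReal.ofReal (|(g y : ℝ) - c * y| / y ^ 2) ≤
      (∑' n : ℕ, ENNReal.ofReal |(max (ginv g n) 1)⁻¹ - (max (n / c) 1)⁻¹|) + 1 := by
  set w : ℝ → ℝ≥0∞ := fun y => ENNReal.ofReal (y ^ 2)⁻¹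
  set s : ℕ → Set ℝ := fun n => Ici (ginv g n) ∆ Ici (n / c)
  have hw : Measurable w := by fun_prop
  calc ∫⁻ y in Ici 1, ENNReal.ofReal (|(g y : ℝ) - c * y| / y ^ 2)
      ≤ ∫⁻ y in Ici 1, (∑' n, (s n).indicator w y) + w y := by
        refine setLIntegral_mono' measurableSet_Ici fun y hy => ?_
        rw [div_eq_mul_inv, ENNReal.ofReal_mul (abs_nonneg _)]
        calc ENNReal.ofReal |(g y : ℝ) - c * y| * w y
            ≤ ((∑' n, (s n).indicator 1 y) + 1) * w y := by
              gcongr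
              exact ofReal_abs_sub_mul_le_tsum_indicator_add_one hgc hc (zero_le_one.trans hy)
          _ = _ := by
              simp only [add_mul, one_mul, ← ENNReal.tsum_mul_right, ← indicator_mul_left,
                Pi.one_apply]
    _ = (∑' n, ∫⁻ y in Ici 1, (s n).indicator w y) + ∫⁻ y in Ici 1, w y := by
        rw [lintegral_add_right _ hw, lintegral_tsum fun n =>
          (hw.indicator (measurableSet_Ici.symmDiff measurableSet_Ici)).aemeasurable]
    _ ≤ _ := by
        refine add_le_add (ENNReal.tsum_le_tsum fun n => ?_) ?_
        · exact lintegral_Ici_one_indicator_Ici_symmDiff_Ici_le _ _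
        · simp [w, lintegral_Ici_inv_sq one_pos]

lemma tendsto_tailP_zero (htail : Tendsto (fun n : ℕ => (n : ℝ) * tailP g n) atTop (𝓝 c)) :
    Tendsto (tailP g) atTop (𝓝 0) :=
  (htail.div_atTop tendsto_natCast_atTop_atTop).congr' <|
    (eventually_ne_atTop 0).mono fun _ hn => mul_div_cancel_left₀ _ (Nat.cast_ne_zero.2 hn)

lemma summable_tailP_sq (htail : Tendsto (fun n : ℕ => (n : ℝ) * tailP g n) atTop (𝓝 c)) :
    Summable fun n => tailP g n ^ 2 := by
  have hO : tailP g =O[atTop] fun n : ℕ => (n : ℝ)⁻¹ := by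
    refine ((htail.isBigO_one ℝ).mul (isBigO_refl (fun n : ℕ => (n : ℝ)⁻¹) atTop)).congr' ?_ ?_
    · filter_upwards [eventually_ne_atTop 0] with n hn
      field_simp
    · simp
  refine summable_of_isBigO_nat ?_ (hO.pow 2)
  simpa only [inv_pow] using Real.summable_nat_pow_inv.2 one_lt_two

lemma ginv_pos_and_abs_inv_ginv_sub_tailP_le {n : ℕ} (ht : tailP g n ≤ 1 / 2) :
    0 < ginv g n ∧ |(ginv g n)⁻¹ - tailP g n| ≤ 2 * tailP g n ^ 2 := by
  have hne : ginv g n ≠ 0 := fun h => by norm_num [tailP, h] at ht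
  refine ⟨(ginv_nonneg g n).lt_of_ne' hne, ?_⟩
  set t := tailP g n
  have hexp : Real.exp (-(ginv g n)⁻¹) = 1 - t := by
    simp only [t, tailP, if_neg hne, neg_div, one_div, sub_sub_cancel]
  have ht0 : 0 ≤ t := by
    have := Real.exp_le_one_iff.2 (neg_nonpos.2 (inv_nonneg.2 (ginv_nonneg g n)))
    linarith
  have hlog := Real.abs_log_sub_add_sum_range_le (x := t) (by rw [abs_of_nonneg ht0]; linarith) 1
  rw [← hexp, Real.log_exp, abs_of_nonneg ht0] at hlog
  simp only [Finset.range_one, Finset.sum_singleton, zero_add, pow_one, Nat.cast_zero,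
    div_one] at hlog
  calc |(ginv g n)⁻¹ - t| = |t + -(ginv g n)⁻¹| := by rw [abs_sub_comm]; ring_nf
    _ ≤ t ^ 2 / (1 - t) := hlog
    _ ≤ 2 * t ^ 2 := by rw [div_le_iff₀ (by linarith)]; nlinarith

lemma summable_abs_inv_max_ginv_one_sub (hc : 0 < c)
    (htail : Tendsto (fun n : ℕ => (n : ℝ) * tailP g n) atTop (𝓝 c))
    (hsum : Summable fun n : ℕ => |c / n - tailP g n|) :
    Summable fun n : ℕ => |(max (ginv g n) 1)⁻¹ - (max (n / c) 1)⁻¹| := by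
  refine .of_norm_bounded_eventually_nat (((summable_tailP_sq htail).mul_left 2).add hsum) ?_
  filter_upwards [(tendsto_tailP_zero htail).eventually_le_const (by norm_num : (0 : ℝ) < 1 / 2),
    eventually_gt_atTop 0] with n ht hn
  obtain ⟨hpos, hle⟩ := ginv_pos_and_abs_inv_ginv_sub_tailP_le ht
  calc ‖|(max (ginv g n) 1)⁻¹ - (max (n / c) 1)⁻¹|‖
      ≤ |(ginv g n)⁻¹ - (n / c)⁻¹| := by
        rw [Real.norm_eq_abs, abs_abs]
        exact abs_inv_max_one_sub_inv_max_one_le hpos (div_pos (Nat.cast_pos.2 hn) hc)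
    _ ≤ |(ginv g n)⁻¹ - tailP g n| + |c / n - tailP g n| := by
        rw [inv_div, abs_sub_comm (c / n)]; exact abs_sub_le _ _ _
    _ ≤ 2 * tailP g n ^ 2 + |c / n - tailP g n| := by gcongr

end

theorem integrable_g_sub_linear_general (g : ℝ → ℕ)
    (hmono : MonotoneOn g (Set.Ici 0))
    (hrc : ∀ x, 0 ≤ x → ContinuousWithinAt g (Set.Ici x) x)
    (hinf : Tendsto g atTop atTop)
    (c : ℝ) (hc : 0 < c)
    (htail : Tendsto (fun n : ℕ => (n : ℝ) * tailP g n) atTop (nhds c))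
    (hsum : Summable fun n : ℕ => |c / (n + 1) - tailP g (n + 1)|) :
    IntegrableOn (fun y : ℝ => |(g y : ℝ) - c * y| / y ^ 2) (Set.Ici 1) volume := by
  have hg : MonotoneOn (fun y => (g y : ℝ)) (Ici 1) :=
    (Nat.mono_cast.comp_monotoneOn hmono).mono (Ici_subset_Ici.2 zero_le_one)
  have hsum' : Summable fun n : ℕ => |c / n - tailP g n| :=
    (summable_nat_add_iff 1).1 (by simpa using hsum)
  refine ⟨(((aemeasurable_restrict_of_monotoneOn measurableSet_Ici hg).sub (by fun_prop)).abs.div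
    (by fun_prop)).aestronglyMeasurable, ?_⟩
  rw [hasFiniteIntegral_iff_ofReal (ae_of_all _ fun y => by positivity)]
  refine (setLIntegral_abs_sub_mul_div_sq_le (ginv_le_iff hmono hrc hinf) hc).trans_lt ?_
  rw [← ENNReal.ofReal_tsum_of_nonneg (fun _ => abs_nonneg _)
    (summable_abs_inv_max_ginv_one_sub hc htail hsum')]
  exact ENNReal.add_lt_top.2 ⟨ENNReal.ofReal_lt_top, ENNReal.one_lt_top⟩

/-- Under the hypotheses of part (c), `∫_1^∞ |g(y) − c y| / y² dy < ∞`. -/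
theorem integrable_g_sub_linear (g : ℝ → ℕ)
    (hg1 : ∀ x, 0 ≤ x → 1 ≤ g x)
    (hmono : MonotoneOn g (Set.Ici 0))
    (hrc : ∀ x, 0 ≤ x → ContinuousWithinAt g (Set.Ici x) x)
    (hinf : Tendsto g atTop atTop)
    (c : ℝ) (hc : 0 < c)
    (htail : Tendsto (fun n : ℕ => (n : ℝ) * tailP g n) atTop (nhds c))
    (hliminf : 0 < liminf (fun n : ℕ => ENNReal.ofReal ((n : ℝ) ^ 2 * pmfP g n)) atTop)
    (hlimsup : limsup (fun n : ℕ => ENNReal.ofReal ((n : ℝ) ^ 2 * pmfP g n)) atTop < ⊤)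
    (hsum : Summable fun n : ℕ => |c / (n + 1) - tailP g (n + 1)|) :
    IntegrableOn (fun y : ℝ => |(g y : ℝ) - c * y| / y ^ 2) (Set.Ici 1) volume :=
  integrable_g_sub_linear_general g hmono hrc hinf c hc htail hsum
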